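/- Let k = 6/5, f = f_k with f_k(z) = ((1+k)/2 − z)^((1+k)/(2k)) · (z + (k−1)/2)^((k−1)/(2k)), and β = 1 + f(0). Let G = (V,E) be any finite simple graph with any arrival order of its vertices, and run PrimalDual with allocation function f and constant β, producing edge values x : E → ℝ. Then x is a fractional matching of G (x_e ≥ 0 for all e, and Σ_{e incident to v} x_e ≤ 1 for every v ∈ V), and for every fractional matching x* of G, Σ_{e∈E} x_e ≥ 0.526 · Σ_{e∈E} x*_e. -/

import Mathlib

/-!
The potentials `y` form a fractional vertex cover: when `v_i` arrives with water level `w_i`, its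
earlier neighbours are raised to at least `w_i` and `v_i` gets `1 - w_i`. This raises `∑ y` by
`∑_j max (w_i - y_j) 0 + (1 - w_i)`, which is at most `β` times the value assigned at that step
because the water level fills `f w_i` exactly unless `w_i = 1`. By weak duality
`∑ x* ≤ ∑ y ≤ β ∑ x`.

For feasibility, track `budget f y = y + f (1 - y)` at each vertex. When `v_i` arrives, its edges
to earlier neighbours get at most `budget f (1 - w_i) / β` in total, and each later raise of its
potential from `y` to `max y w` assigns at most `(budget f (max y w) - budget f y) / β`, by the
tangent-line inequality of the concave `f` with `f' z = -z / f (1 - z)`. So the value at a vertex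
is at most `budget f 1 / β = 1`. Finally `f_{6/5} 0 ≤ 237/263`, i.e. `1 / β ≥ 0.526`.
-/

open Finset

/-- The water level chosen by `GreedyAllocation` with allocation function `f`:
the supremum of `t ∈ [0,1]` such that raising all potentials in `S` up to `t`
costs at most `f t`. -/
noncomputable def waterLevel {ι : Type*} (f : ℝ → ℝ) (S : Finset ι) (y : ι → ℝ) : ℝ :=
  sSup {t ∈ Set.Icc (0:ℝ) 1 | ∑ u ∈ S, max (t - y u) 0 ≤ f t}

/-- The previously arrived neighbors of vertex `i` (vertices arrive in the
order `0, 1, …, n-1`; `E` is the adjacency predicate of the graph). -/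
def neighborsBefore {n : ℕ} (E : Fin n → Fin n → Bool) (i : Fin n) : Finset (Fin n) :=
  Finset.univ.filter fun j => j < i ∧ E j i = true

/-- Potentials maintained by `GreedyAllocation` with allocation function `f`
after `i` vertices have been processed. When vertex `i` arrives, the water
level `w` is computed over its previously arrived neighbors; each such
neighbor's potential is raised to at least `w`, and vertex `i` receives
potential `1 - w`. -/
noncomputable def greedyPotential (f : ℝ → ℝ) {n : ℕ} (E : Fin n → Fin n → Bool) :
    ℕ → Fin n → ℝ
  | 0 => fun _ => 0
  | (i + 1) => fun v =>
      if h : i < n then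
        let vi : Fin n := ⟨i, h⟩
        let w := waterLevel f (neighborsBefore E vi) (greedyPotential f E i)
        if v = vi then 1 - w
        else if v ∈ neighborsBefore E vi then max (greedyPotential f E i v) w
        else greedyPotential f E i v
      else greedyPotential f E i v

/-- The water level used when processing vertex `i`. -/
noncomputable def stepLevel (f : ℝ → ℝ) {n : ℕ} (E : Fin n → Fin n → Bool) (i : Fin n) : ℝ :=
  waterLevel f (neighborsBefore E i) (greedyPotential f E i.val)

/-- The edge values set by the `PrimalDual` algorithm: when vertex `i` arrives,
for each previously arrived neighbor `j` the edge `(j,i)` receives value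
`(max(w_i - y_j, 0)/β)·(1 + (1 - w_i)/f(w_i))`, using the potentials before
updating; all other pairs get `0`. -/
noncomputable def pdEdge (f : ℝ → ℝ) (β : ℝ) {n : ℕ} (E : Fin n → Fin n → Bool)
    (j i : Fin n) : ℝ :=
  if j < i ∧ E j i = true then
    (max (stepLevel f E i - greedyPotential f E i.val j) 0 / β) *
      (1 + (1 - stepLevel f E i) / f (stepLevel f E i))
  else 0

open Set

/-- The allocation functions for which PrimalDual is `1 / (1 + f 0)`-competitive: positive
solutions on `[0, 1]` of `f' z = -z / f (1 - z)` that are concave, i.e. `-f'` is monotone. -/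
structure IsAllocationFn (f : ℝ → ℝ) : Prop where
  pos : ∀ z ∈ Icc (0 : ℝ) 1, 0 < f z
  hasDerivAt : ∀ z ∈ Icc (0 : ℝ) 1, HasDerivAt f (-(z / f (1 - z))) z
  monotoneOn_div : MonotoneOn (fun z => z / f (1 - z)) (Icc 0 1)

noncomputable def budget (f : ℝ → ℝ) (y : ℝ) : ℝ := y + f (1 - y)

lemma budget_one (f : ℝ → ℝ) : budget f 1 = 1 + f 0 := by
  simp [budget]

lemma budget_one_sub (f : ℝ → ℝ) (w : ℝ) : budget f (1 - w) = 1 - w + f w := by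
  simp [budget]

namespace IsAllocationFn

variable {f : ℝ → ℝ}

lemma continuousOn (hf : IsAllocationFn f) : ContinuousOn f (Icc 0 1) :=
  fun z hz => (hf.hasDerivAt z hz).continuousAt.continuousWithinAt

-- The tangent-line inequality `f b ≤ f a + f' a * (b - a)` of the concave `f`.
lemma sub_mul_div_le_sub (hf : IsAllocationFn f) {a b : ℝ} (ha : 0 ≤ a) (hab : a ≤ b)
    (hb : b ≤ 1) : (b - a) * (a / f (1 - a)) ≤ f a - f b := by
  rcases hab.eq_or_lt with rfl | hlt
  · simp
  have hsub : Icc a b ⊆ Icc 0 1 := Icc_subset_Icc ha hb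
  obtain ⟨c, hc, hslope⟩ := exists_hasDerivAt_eq_slope f _ hlt (hf.continuousOn.mono hsub)
    fun z hz => hf.hasDerivAt z (hsub (Ioo_subset_Icc_self hz))
  have hac : a / f (1 - a) ≤ c / f (1 - c) :=
    hf.monotoneOn_div ⟨ha, hb.trans' hab⟩ (hsub (Ioo_subset_Icc_self hc)) hc.1.le
  rw [eq_div_iff (sub_pos.2 hlt).ne'] at hslope
  nlinarith

lemma one_add_div_nonneg (hf : IsAllocationFn f) {w : ℝ} (hw : w ∈ Icc (0 : ℝ) 1) :
    0 ≤ 1 + (1 - w) / f w :=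
  add_nonneg zero_le_one (div_nonneg (sub_nonneg.2 hw.2) (hf.pos w hw).le)

lemma max_sub_mul_le_budget_sub (hf : IsAllocationFn f) {y w : ℝ} (hy : 0 ≤ y)
    (hw : w ∈ Icc (0 : ℝ) 1) :
    max (w - y) 0 * (1 + (1 - w) / f w) ≤ budget f (max y w) - budget f y := by
  rcases le_total w y with hwy | hyw
  · simp [hwy]
  have h := hf.sub_mul_div_le_sub (a := 1 - w) (b := 1 - y) (by linarith [hw.2]) (by linarith)
    (by linarith)
  rw [sub_sub_cancel] at h
  rw [max_eq_left (sub_nonneg.2 hyw), max_eq_right hyw, budget, budget]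
  linarith [show (w - y) * (1 + (1 - w) / f w) = (w - y) + (1 - y - (1 - w)) * ((1 - w) / f w)
    by ring]

lemma monotoneOn_budget (hf : IsAllocationFn f) : MonotoneOn (budget f) (Icc 0 1) := by
  intro y hy z hz hyz
  have h := hf.max_sub_mul_le_budget_sub hy.1 hz
  rw [max_eq_right hyz, max_eq_left (sub_nonneg.2 hyz)] at h
  nlinarith [hf.one_add_div_nonneg hz]

end IsAllocationFn

section AllocFn

/-- The allocation function `f_k` of the paper. -/
noncomputable def allocFn (k z : ℝ) : ℝ :=
  ((1 + k) / 2 - z) ^ ((1 + k) / (2 * k)) * (z + (k - 1) / 2) ^ ((k - 1) / (2 * k))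

variable {k : ℝ}

lemma allocFn_exponent_add (hk : k ≠ 0) : (1 + k) / (2 * k) + (k - 1) / (2 * k) = 1 := by
  field_simp
  ring

lemma allocFn_one_sub (k z : ℝ) :
    allocFn k (1 - z) =
      (z + (k - 1) / 2) ^ ((1 + k) / (2 * k)) * ((1 + k) / 2 - z) ^ ((k - 1) / (2 * k)) := by
  unfold allocFn
  congr 2 <;> ring

lemma allocFn_pos (hk : 1 < k) {z : ℝ} (hz : z ∈ Icc (0 : ℝ) 1) : 0 < allocFn k z :=
  mul_pos (Real.rpow_pos_of_pos (by linarith [hz.2]) _)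
    (Real.rpow_pos_of_pos (by linarith [hz.1]) _)

lemma hasDerivAt_allocFn (hk : 1 < k) {z : ℝ} (hz : z ∈ Icc (0 : ℝ) 1) :
    HasDerivAt (allocFn k) (-(z / allocFn k (1 - z))) z := by
  have ha : 0 < (1 + k) / 2 - z := by linarith [hz.2]
  have hb : 0 < z + (k - 1) / 2 := by linarith [hz.1]
  refine ((((hasDerivAt_id' z).const_sub ((1 + k) / 2)).rpow_const (p := (1 + k) / (2 * k))
    (Or.inl ha.ne')).mul (((hasDerivAt_id' z).add_const ((k - 1) / 2)).rpow_const
    (p := (k - 1) / (2 * k)) (Or.inl hb.ne'))).congr_deriv ?_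
  rw [allocFn_one_sub, Real.rpow_sub_one ha.ne', Real.rpow_sub_one hb.ne']
  -- The exponents add up to `1`, so `f_k z * f_k (1 - z) = ((1 + k) / 2 - z) * (z + (k - 1) / 2)`.
  have hsplit {x : ℝ} (hx : 0 < x) : x ^ ((1 + k) / (2 * k)) * x ^ ((k - 1) / (2 * k)) = x := by
    rw [← Real.rpow_add hx, allocFn_exponent_add (by linarith), Real.rpow_one]
  have hA := hsplit ha
  have hB := hsplit hb
  set P := ((1 + k) / 2 - z) ^ ((1 + k) / (2 * k))
  set Q := ((1 + k) / 2 - z) ^ ((k - 1) / (2 * k))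
  set R := (z + (k - 1) / 2) ^ ((1 + k) / (2 * k))
  set T := (z + (k - 1) / 2) ^ ((k - 1) / (2 * k))
  have hP : 0 < P := Real.rpow_pos_of_pos ha _
  have hQ : 0 < Q := Real.rpow_pos_of_pos ha _
  have hR : 0 < R := Real.rpow_pos_of_pos hb _
  have hT : 0 < T := Real.rpow_pos_of_pos hb _
  rw [← hA, ← hB]
  field_simp
  linear_combination (k - 1) * hA - (1 + k) * hB

lemma div_allocFn_one_sub (hk : 1 < k) {z : ℝ} (hz : z ∈ Icc (0 : ℝ) 1) :
    z / allocFn k (1 - z) = (z / (z + (k - 1) / 2)) ^ ((1 + k) / (2 * k))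
      * (z / ((1 + k) / 2 - z)) ^ ((k - 1) / (2 * k)) := by
  have hpq := allocFn_exponent_add (k := k) (by linarith)
  rw [allocFn_one_sub, Real.div_rpow hz.1 (by linarith [hz.1]),
    Real.div_rpow hz.1 (by linarith [hz.2]), div_mul_div_comm,
    ← Real.rpow_add' hz.1 (by simp [hpq]), hpq, Real.rpow_one]

lemma monotoneOn_div_allocFn_one_sub (hk : 1 < k) :
    MonotoneOn (fun z => z / allocFn k (1 - z)) (Icc 0 1) := by
  intro x hx y hy hxy
  have hbx : 0 < x + (k - 1) / 2 := by linarith [hx.1]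
  have hby : 0 < y + (k - 1) / 2 := by linarith [hy.1]
  have hax : 0 < (1 + k) / 2 - x := by linarith [hx.2]
  have hay : 0 < (1 + k) / 2 - y := by linarith [hy.2]
  simp only [div_allocFn_one_sub hk hx, div_allocFn_one_sub hk hy]
  gcongr ?_ ^ _ * ?_ ^ _
  · exact Real.rpow_nonneg (div_nonneg hx.1 hax.le) _
  · exact Real.rpow_nonneg (div_nonneg hy.1 hby.le) _
  · exact div_nonneg hx.1 hbx.le
  · rw [div_le_div_iff₀ hbx hby]
    nlinarith
  · exact div_nonneg hx.1 hax.le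
  · rw [div_le_div_iff₀ hax hay]
    nlinarith

lemma isAllocationFn_allocFn (hk : 1 < k) : IsAllocationFn (allocFn k) where
  pos _ := allocFn_pos hk
  hasDerivAt _ := hasDerivAt_allocFn hk
  monotoneOn_div := monotoneOn_div_allocFn_one_sub hk

-- `0.526 * (1 + 237 / 263) = 1`.
lemma allocFn_six_fifths_zero_le : allocFn (6 / 5) 0 ≤ 237 / 263 := by
  have h : allocFn (6 / 5) 0 = ((11 / 10 : ℝ) ^ 11 * (1 / 10)) ^ (12⁻¹ : ℝ) := by
    rw [Real.mul_rpow (by positivity) (by norm_num), ← Real.rpow_natCast,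
      ← Real.rpow_mul (by norm_num)]
    norm_num [allocFn]
  rw [h, Real.rpow_inv_le_iff_of_pos (by positivity) (by norm_num) (by norm_num)]
  norm_num

end AllocFn

section WaterLevel

variable {ι : Type*} {f : ℝ → ℝ} {S : Finset ι} {y : ι → ℝ}

lemma waterLevel_mem_Icc : waterLevel f S y ∈ Icc (0 : ℝ) 1 := by
  change sSup {t ∈ Icc (0 : ℝ) 1 | ∑ u ∈ S, max (t - y u) 0 ≤ f t} ∈ _
  set T := {t ∈ Icc (0 : ℝ) 1 | ∑ u ∈ S, max (t - y u) 0 ≤ f t}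
  rcases T.eq_empty_or_nonempty with hT | hT
  · simp [hT]
  exact ⟨hT.elim fun t ht => ht.1.1.trans (le_csSup ⟨1, fun t ht => ht.1.2⟩ ht),
    csSup_le hT fun t ht => ht.1.2⟩

lemma continuous_sum_max_sub (S : Finset ι) (y : ι → ℝ) :
    Continuous fun t : ℝ => ∑ u ∈ S, max (t - y u) 0 := by
  fun_prop

lemma sum_max_waterLevel_sub_le (hf : ContinuousOn f (Icc 0 1)) (hf0 : 0 ≤ f 0)
    (hy : ∀ u ∈ S, 0 ≤ y u) : ∑ u ∈ S, max (waterLevel f S y - y u) 0 ≤ f (waterLevel f S y) := by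
  have hcompact : IsCompact {t ∈ Icc (0 : ℝ) 1 | ∑ u ∈ S, max (t - y u) 0 ≤ f t} :=
    isCompact_Icc.of_isClosed_subset
      (isClosed_Icc.isClosed_le (continuous_sum_max_sub S y).continuousOn hf) fun t ht => ht.1
  have hzero : ∑ u ∈ S, max (0 - y u) 0 = 0 :=
    Finset.sum_eq_zero fun u hu => max_eq_right (by linarith [hy u hu])
  exact (hcompact.sSup_mem ⟨0, ⟨le_rfl, zero_le_one⟩, hzero.symm ▸ hf0⟩).2

-- Above the water level the cost exceeds `f`, so by continuity the level fills `f` exactly.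
lemma le_sum_max_waterLevel_sub (hf : ContinuousOn f (Icc 0 1)) (hlt : waterLevel f S y < 1) :
    f (waterLevel f S y) ≤ ∑ u ∈ S, max (waterLevel f S y - y u) 0 := by
  set w := waterLevel f S y
  have hsub : Ioc w 1 ⊆ Icc 0 1 :=
    Ioc_subset_Icc_self.trans (Icc_subset_Icc_left waterLevel_mem_Icc.1)
  refine ContinuousWithinAt.closure_le (s := Ioc w 1) ?_ ((hf w waterLevel_mem_Icc).mono hsub)
    (continuous_sum_max_sub S y).continuousWithinAt fun t ht => ?_
  · rw [closure_Ioc hlt.ne]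
    exact ⟨le_rfl, hlt.le⟩
  · by_contra! hcost
    exact ht.1.not_ge (le_csSup ⟨1, fun s hs => hs.1.2⟩ ⟨hsub ht, hcost.le⟩)

end WaterLevel

section Potentials

variable {f : ℝ → ℝ} {n : ℕ} {E : Fin n → Fin n → Bool}

lemma mem_neighborsBefore {i j : Fin n} : j ∈ neighborsBefore E i ↔ j < i ∧ E j i = true := by
  simp [neighborsBefore]

lemma self_notMem_neighborsBefore (i : Fin n) : i ∉ neighborsBefore E i := by
  simp [mem_neighborsBefore]

lemma stepLevel_mem_Icc (i : Fin n) : stepLevel f E i ∈ Icc (0 : ℝ) 1 :=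
  waterLevel_mem_Icc

lemma greedyPotential_succ (i v : Fin n) :
    greedyPotential f E (i + 1) v =
      if v = i then 1 - stepLevel f E i
      else if v ∈ neighborsBefore E i then max (greedyPotential f E i v) (stepLevel f E i)
      else greedyPotential f E i v := by
  simp only [greedyPotential, i.isLt, dif_pos, Fin.eta]
  rfl

lemma greedyPotential_succ_of_le {i : ℕ} (hi : n ≤ i) :
    greedyPotential f E (i + 1) = greedyPotential f E i := by
  funext v
  simp [greedyPotential, hi.not_gt]

lemma greedyPotential_of_le {i : ℕ} {v : Fin n} (hiv : i ≤ v) : greedyPotential f E i v = 0 := by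
  induction i with
  | zero => rfl
  | succ i ih =>
    by_cases hi : i < n
    · have hv : v ≠ ⟨i, hi⟩ := fun h => by simp [h] at hiv
      have hnb : v ∉ neighborsBefore E ⟨i, hi⟩ := fun h => by
        have := (mem_neighborsBefore.1 h).1
        simp only [Fin.lt_def] at this
        omega
      rw [greedyPotential_succ ⟨i, hi⟩, if_neg hv, if_neg hnb]
      exact ih (by omega)
    · rw [greedyPotential_succ_of_le (not_lt.1 hi)]
      exact ih (by omega)

lemma greedyPotential_succ_eq_add (i v : Fin n) :
    greedyPotential f E (i + 1) v = greedyPotential f E i v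
      + (if v = i then 1 - stepLevel f E i else 0)
      + (if v ∈ neighborsBefore E i then max (stepLevel f E i - greedyPotential f E i v) 0
          else 0) := by
  by_cases hvi : v = i
  · subst hvi
    simp [greedyPotential_succ, greedyPotential_of_le le_rfl, self_notMem_neighborsBefore]
  by_cases hv : v ∈ neighborsBefore E i
  · simp only [greedyPotential_succ, hvi, hv, if_false, if_true, add_zero]
    rcases le_total (greedyPotential f E i v) (stepLevel f E i) with h | h
    · rw [max_eq_right h, max_eq_left (sub_nonneg.2 h)]
      ring
    · rw [max_eq_left h, max_eq_right (sub_nonpos.2 h), add_zero]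
  · simp [greedyPotential_succ, hvi, hv]

lemma monotone_greedyPotential (v : Fin n) : Monotone fun i => greedyPotential f E i v := by
  refine monotone_nat_of_le_succ fun i => ?_
  by_cases hi : i < n
  · rw [show i = (⟨i, hi⟩ : Fin n) from rfl, greedyPotential_succ_eq_add]
    have := (stepLevel_mem_Icc (f := f) (E := E) ⟨i, hi⟩).2
    split_ifs <;>
      linarith [le_max_right (stepLevel f E ⟨i, hi⟩ - greedyPotential f E i v) 0]
  · rw [greedyPotential_succ_of_le (not_lt.1 hi)]

lemma greedyPotential_nonneg (i : ℕ) (v : Fin n) : 0 ≤ greedyPotential f E i v :=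
  monotone_greedyPotential v (Nat.zero_le i)

lemma greedyPotential_le_one (i : ℕ) (v : Fin n) : greedyPotential f E i v ≤ 1 := by
  induction i with
  | zero => exact zero_le_one
  | succ i ih =>
    by_cases hi : i < n
    · have hw := stepLevel_mem_Icc (f := f) (E := E) ⟨i, hi⟩
      rw [show i = (⟨i, hi⟩ : Fin n) from rfl, greedyPotential_succ]
      split_ifs
      · linarith [hw.1]
      · exact max_le ih hw.2
      · exact ih
    · rwa [greedyPotential_succ_of_le (not_lt.1 hi)]

lemma greedyPotential_succ_self (i : Fin n) :
    greedyPotential f E (i + 1) i = 1 - stepLevel f E i := by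
  simp [greedyPotential_succ]

lemma stepLevel_le_greedyPotential_succ {i j : Fin n} (hj : j ∈ neighborsBefore E i) :
    stepLevel f E i ≤ greedyPotential f E (i + 1) j := by
  have hji : j ≠ i := fun h => self_notMem_neighborsBefore i (h ▸ hj)
  rw [greedyPotential_succ, if_neg hji, if_pos hj]
  exact le_max_right _ _

lemma one_le_greedyPotential_add {i j : Fin n} (hj : j ∈ neighborsBefore E i) :
    1 ≤ greedyPotential f E n j + greedyPotential f E n i := by
  have hmono := fun v => monotone_greedyPotential (f := f) (E := E) v (Nat.succ_le_of_lt i.isLt)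
  linarith [stepLevel_le_greedyPotential_succ (f := f) hj,
    greedyPotential_succ_self (f := f) (E := E) i, hmono i, hmono j]

end Potentials

lemma Fin.sum_univ_succ_sub {M : Type*} [AddCommGroup M] (Φ : ℕ → M) (n : ℕ) :
    ∑ i : Fin n, (Φ (i + 1) - Φ i) = Φ n - Φ 0 := by
  rw [Fin.sum_univ_eq_sum_range (fun i => Φ (i + 1) - Φ i), Finset.sum_range_sub]

theorem sum_le_sum_of_vertexCover {ι : Type*} [Fintype ι] {x : ι → ι → ℝ} {y : ι → ℝ}
    (hx : ∀ i j, 0 ≤ x i j) (hdeg : ∀ v, ∑ u, (x u v + x v u) ≤ 1) (hy : ∀ v, 0 ≤ y v)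
    (hcover : ∀ i j, x i j ≠ 0 → 1 ≤ y i + y j) : ∑ i, ∑ j, x i j ≤ ∑ v, y v := calc
  ∑ i, ∑ j, x i j ≤ ∑ i, ∑ j, x i j * (y i + y j) :=
    Finset.sum_le_sum fun i _ => Finset.sum_le_sum fun j _ => by
      rcases eq_or_ne (x i j) 0 with h | h
      · simp [h]
      · exact le_mul_of_one_le_right (hx i j) (hcover i j h)
  _ = ∑ v, y v * ∑ u, (x u v + x v u) := by
    simp only [mul_add, Finset.sum_add_distrib, Finset.mul_sum]
    rw [add_comm, Finset.sum_comm (f := fun i j => x i j * y j)]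
    simp only [mul_comm]
  _ ≤ ∑ v, y v := Finset.sum_le_sum fun v _ => mul_le_of_le_one_right (hy v) (hdeg v)

section PrimalDual

variable {f : ℝ → ℝ} {β : ℝ} {n : ℕ} {E : Fin n → Fin n → Bool}

lemma sum_max_stepLevel_sub_le (hf : IsAllocationFn f) (i : Fin n) :
    ∑ u ∈ neighborsBefore E i, max (stepLevel f E i - greedyPotential f E i u) 0
      ≤ f (stepLevel f E i) :=
  sum_max_waterLevel_sub_le hf.continuousOn (hf.pos 0 ⟨le_rfl, zero_le_one⟩).le
    fun u _ => greedyPotential_nonneg _ u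

lemma pdEdge_of_mem {i j : Fin n} (hj : j ∈ neighborsBefore E i) :
    pdEdge f β E j i = max (stepLevel f E i - greedyPotential f E i j) 0 / β
      * (1 + (1 - stepLevel f E i) / f (stepLevel f E i)) :=
  if_pos (mem_neighborsBefore.1 hj)

lemma pdEdge_of_notMem {i j : Fin n} (hj : j ∉ neighborsBefore E i) : pdEdge f β E j i = 0 :=
  if_neg (mt mem_neighborsBefore.2 hj)

lemma pdEdge_nonneg (hf : IsAllocationFn f) (hβ : 0 ≤ β) (j i : Fin n) :
    0 ≤ pdEdge f β E j i := by
  by_cases hj : j ∈ neighborsBefore E i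
  · rw [pdEdge_of_mem hj]
    exact mul_nonneg (div_nonneg (le_max_right _ _) hβ)
      (hf.one_add_div_nonneg (stepLevel_mem_Icc i))
  · rw [pdEdge_of_notMem hj]

lemma mul_sum_pdEdge_left (hβ : β ≠ 0) (i : Fin n) :
    β * ∑ j, pdEdge f β E j i =
      (∑ j ∈ neighborsBefore E i, max (stepLevel f E i - greedyPotential f E i j) 0)
        * (1 + (1 - stepLevel f E i) / f (stepLevel f E i)) := by
  rw [← Finset.sum_subset (Finset.subset_univ _) fun j _ hj => pdEdge_of_notMem hj,
    Finset.mul_sum, Finset.sum_mul]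
  refine Finset.sum_congr rfl fun j hj => ?_
  rw [pdEdge_of_mem hj]
  field_simp

lemma mul_sum_pdEdge_left_le_budget (hf : IsAllocationFn f) (hβ : β ≠ 0) (i : Fin n) :
    β * ∑ j, pdEdge f β E j i ≤ budget f (1 - stepLevel f E i) := by
  have hw := stepLevel_mem_Icc (f := f) (E := E) i
  have hfw := hf.pos _ hw
  rw [mul_sum_pdEdge_left hβ, budget_one_sub]
  calc _ ≤ f (stepLevel f E i) * (1 + (1 - stepLevel f E i) / f (stepLevel f E i)) :=
        mul_le_mul_of_nonneg_right (sum_max_stepLevel_sub_le hf i) (hf.one_add_div_nonneg hw)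
    _ = 1 - stepLevel f E i + f (stepLevel f E i) := by
        field_simp
        ring

lemma sum_greedyPotential_succ (i : Fin n) :
    ∑ v, greedyPotential f E (i + 1) v = ∑ v, greedyPotential f E i v + (1 - stepLevel f E i)
      + ∑ v ∈ neighborsBefore E i, max (stepLevel f E i - greedyPotential f E i v) 0 := by
  simp only [greedyPotential_succ_eq_add, Finset.sum_add_distrib, Finset.sum_ite_eq',
    Finset.mem_univ, if_true, Finset.sum_ite_mem, Finset.univ_inter]

-- When the level stays below `1` it fills `f` exactly, which pays for the new potential `1 - w`.
lemma sum_greedyPotential_succ_sub_le (hf : IsAllocationFn f) (hβ : β ≠ 0) (i : Fin n) :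
    ∑ v, greedyPotential f E (i + 1) v - ∑ v, greedyPotential f E i v
      ≤ β * ∑ j, pdEdge f β E j i := by
  rw [sum_greedyPotential_succ, mul_sum_pdEdge_left hβ]
  set w := stepLevel f E i
  set c := ∑ v ∈ neighborsBefore E i, max (w - greedyPotential f E i v) 0
  have hw : w ∈ Icc (0 : ℝ) 1 := stepLevel_mem_Icc i
  rcases hw.2.lt_or_eq with hlt | heq
  · have hfull : f w ≤ c := le_sum_max_waterLevel_sub hf.continuousOn hlt
    have hfw := hf.pos w hw
    have : 1 - w ≤ c * ((1 - w) / f w) := calc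
      1 - w = f w * ((1 - w) / f w) := by field_simp
      _ ≤ c * ((1 - w) / f w) :=
        mul_le_mul_of_nonneg_right hfull (div_nonneg (sub_nonneg.2 hw.2) hfw.le)
    linarith [mul_add c 1 ((1 - w) / f w)]
  · simp [heq]

lemma mul_pdEdge_le_budget_sub (hf : IsAllocationFn f) (hβ : β ≠ 0) {i v : Fin n} (hvi : v ≠ i) :
    β * pdEdge f β E v i
      ≤ budget f (greedyPotential f E (i + 1) v) - budget f (greedyPotential f E i v) := by
  rw [greedyPotential_succ, if_neg hvi]
  by_cases hv : v ∈ neighborsBefore E i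
  · rw [pdEdge_of_mem hv, if_pos hv, ← mul_assoc, mul_div_cancel₀ _ hβ]
    exact hf.max_sub_mul_le_budget_sub (greedyPotential_nonneg _ v) (stepLevel_mem_Icc i)
  · simp [pdEdge_of_notMem hv, hv]

lemma mul_sum_pdEdge_right_le (hf : IsAllocationFn f) (hβ : β ≠ 0) (v : Fin n) :
    β * ∑ i, pdEdge f β E v i
      ≤ budget f (greedyPotential f E n v) - budget f (1 - stepLevel f E v) := by
  have hself : β * pdEdge f β E v v = 0 := by
    rw [pdEdge_of_notMem (self_notMem_neighborsBefore v), mul_zero]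
  calc β * ∑ i, pdEdge f β E v i = ∑ i ∈ Finset.univ.erase v, β * pdEdge f β E v i := by
        rw [Finset.mul_sum, Finset.sum_erase Finset.univ (a := v) hself]
    _ ≤ ∑ i ∈ Finset.univ.erase v,
          (budget f (greedyPotential f E (i + 1) v) - budget f (greedyPotential f E i v)) :=
        Finset.sum_le_sum fun i hi =>
          mul_pdEdge_le_budget_sub hf hβ (Finset.ne_of_mem_erase hi).symm
    _ = budget f (greedyPotential f E n v) - budget f (1 - stepLevel f E v) := by
        rw [Finset.sum_erase_eq_sub (Finset.mem_univ v),
          Fin.sum_univ_succ_sub (fun i => budget f (greedyPotential f E i v)),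
          greedyPotential_succ_self, greedyPotential_of_le le_rfl,
          greedyPotential_of_le (Nat.zero_le _)]
        ring

theorem sum_pdEdge_add_le_one (hf : IsAllocationFn f) (v : Fin n) :
    ∑ u, (pdEdge f (1 + f 0) E u v + pdEdge f (1 + f 0) E v u) ≤ 1 := by
  have hβ : 0 < 1 + f 0 := by linarith [hf.pos 0 ⟨le_rfl, zero_le_one⟩]
  have hin := mul_sum_pdEdge_left_le_budget (E := E) hf hβ.ne' v
  have hout := mul_sum_pdEdge_right_le (E := E) hf hβ.ne' v
  have hfinal : budget f (greedyPotential f E n v) ≤ 1 + f 0 :=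
    budget_one f ▸ hf.monotoneOn_budget ⟨greedyPotential_nonneg n v, greedyPotential_le_one n v⟩
      ⟨zero_le_one, le_rfl⟩ (greedyPotential_le_one n v)
  rw [Finset.sum_add_distrib, ← mul_le_mul_iff_right₀ hβ, mul_add, mul_one]
  linarith

lemma sum_greedyPotential_le (hf : IsAllocationFn f) (hβ : β ≠ 0) :
    ∑ v, greedyPotential f E n v ≤ β * ∑ j, ∑ i, pdEdge f β E j i := calc
  ∑ v, greedyPotential f E n v
      = ∑ i : Fin n, (∑ v, greedyPotential f E (i + 1) v - ∑ v, greedyPotential f E i v) := by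
    rw [Fin.sum_univ_succ_sub (fun i => ∑ v, greedyPotential f E i v)]
    simp [greedyPotential_of_le (Nat.zero_le _)]
  _ ≤ ∑ i, β * ∑ j, pdEdge f β E j i :=
    Finset.sum_le_sum fun i _ => sum_greedyPotential_succ_sub_le hf hβ i
  _ = β * ∑ j, ∑ i, pdEdge f β E j i := by
    rw [Finset.sum_comm, Finset.mul_sum]

theorem sum_le_mul_sum_pdEdge (hf : IsAllocationFn f) (hβ : β ≠ 0) (xstar : Fin n → Fin n → ℝ)
    (hx : ∀ j i, 0 ≤ xstar j i) (hsupp : ∀ j i, ¬(j < i ∧ E j i = true) → xstar j i = 0)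
    (hdeg : ∀ v, ∑ u, (xstar u v + xstar v u) ≤ 1) :
    ∑ j, ∑ i, xstar j i ≤ β * ∑ j, ∑ i, pdEdge f β E j i :=
  (sum_le_sum_of_vertexCover hx hdeg (greedyPotential_nonneg n) fun j i hji =>
    one_le_greedyPotential_add (mem_neighborsBefore.2 (not_not.1 (mt (hsupp j i) hji)))).trans
    (sum_greedyPotential_le hf hβ)

end PrimalDual

theorem primalDual_matching_competitive_general (k : ℝ) (hk : k = 6 / 5) (f : ℝ → ℝ)
    (hf : ∀ z, f z = ((1 + k) / 2 - z) ^ ((1 + k) / (2 * k)) *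
                     (z + (k - 1) / 2) ^ ((k - 1) / (2 * k)))
    (β : ℝ) (hβ : β = 1 + f 0)
    (n : ℕ) (E : Fin n → Fin n → Bool)
    (x : Fin n → Fin n → ℝ) (hx : x = pdEdge f β E) :
    (∀ j i, 0 ≤ x j i) ∧
    (∀ v, ∑ u, (x u v + x v u) ≤ 1) ∧
    (∀ xstar : Fin n → Fin n → ℝ,
      (∀ j i, 0 ≤ xstar j i) →
      (∀ j i, ¬(j < i ∧ E j i = true) → xstar j i = 0) →
      (∀ v, ∑ u, (xstar u v + xstar v u) ≤ 1) →
      0.526 * ∑ j, ∑ i, xstar j i ≤ ∑ j, ∑ i, x j i) := by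
  obtain rfl : f = allocFn k := funext hf
  subst hk hβ hx
  have halloc := isAllocationFn_allocFn (k := 6 / 5) (by norm_num)
  have hβ : 0 < 1 + allocFn (6 / 5) 0 := by linarith [halloc.pos 0 ⟨le_rfl, zero_le_one⟩]
  refine ⟨pdEdge_nonneg halloc hβ.le, sum_pdEdge_add_le_one halloc, fun xstar hx hsupp hdeg => ?_⟩
  have hsize : 0 ≤ ∑ j, ∑ i, pdEdge (allocFn (6 / 5)) (1 + allocFn (6 / 5) 0) E j i :=
    Finset.sum_nonneg fun j _ => Finset.sum_nonneg fun i _ => pdEdge_nonneg halloc hβ.le j i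
  calc 0.526 * ∑ j, ∑ i, xstar j i
      ≤ 0.526 * ((1 + allocFn (6 / 5) 0) * ∑ j, ∑ i, pdEdge _ _ E j i) := by
        gcongr
        exact sum_le_mul_sum_pdEdge halloc hβ.ne' xstar hx hsupp hdeg
    _ = (0.526 * (1 + allocFn (6 / 5) 0)) * ∑ j, ∑ i, pdEdge _ _ E j i := by ring
    _ ≤ ∑ j, ∑ i, pdEdge _ _ E j i :=
        mul_le_of_le_one_left hsize (by linarith [allocFn_six_fifths_zero_le])

/-- `PrimalDual` with allocation function `f_{6/5}` and `β = 1 + f_{6/5}(0)` is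
`0.526`-competitive for online fractional matching in general graphs: the
produced edge values form a fractional matching whose size is at least
`0.526` times the size of any fractional matching. -/
theorem primalDual_matching_competitive (k : ℝ) (hk : k = 6 / 5) (f : ℝ → ℝ)
    (hf : ∀ z, f z = ((1 + k) / 2 - z) ^ ((1 + k) / (2 * k)) *
                     (z + (k - 1) / 2) ^ ((k - 1) / (2 * k)))
    (β : ℝ) (hβ : β = 1 + f 0)
    (n : ℕ) (E : Fin n → Fin n → Bool)
    (hsymm : ∀ i j, E i j = E j i) (hloop : ∀ i, E i i = false)
    (x : Fin n → Fin n → ℝ) (hx : x = pdEdge f β E) :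
    (∀ j i, 0 ≤ x j i) ∧
    (∀ v, ∑ u, (x u v + x v u) ≤ 1) ∧
    (∀ xstar : Fin n → Fin n → ℝ,
      (∀ j i, 0 ≤ xstar j i) →
      (∀ j i, ¬(j < i ∧ E j i = true) → xstar j i = 0) →
      (∀ v, ∑ u, (xstar u v + xstar v u) ≤ 1) →
      0.526 * ∑ j, ∑ i, xstar j i ≤ ∑ j, ∑ i, x j i) :=
  primalDual_matching_competitive_general k hk f hf β hβ n E x hx
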